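/- Let K be a compact Hausdorff space, ι an uncountable type, and U : ι → Set K a family of pairwise disjoint nonempty clopen subsets of K such that each U α admits a Cantor scheme of clopen subsets of K with A [] = U α. Then there exists a linear isometry T : c₀(ι) →ₗᵢ C(K, ℝ) such that for every g ≠ 0 the range of T g is a nondegenerate closed interval: there exist a b : ℝ with a < b and Set.range (T g) = Set.Icc a b. -/

import Mathlib

/-!
Each Cantor scheme `A` on `U α` yields a continuous `φ α : K → [0, 1]` that vanishes off `U α`
and maps `U α` onto `[0, 1]`: the `n`-th binary digit of `φ α x` is `1` exactly when `x` lies in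
a cylinder `A (s ++ [true])` with `s.length = n`, and by compactness every digit sequence is
realised at a point of a nested intersection of cylinders.

Since the `U α` are disjoint, `T g = ∑ α, g α • φ α` converges in `C(K, ℝ)` for `g ∈ c₀(ι)`; it
equals `g α * φ α` on `U α` and `0` off `⋃ α, U α`. Hence `‖T g‖ = sup |g α|`, and the range of
`T g` is `⋃ α, g α • [0, 1]`, a compact union of intervals through `0`, hence an interval, which
is nondegenerate as soon as `g ≠ 0`.
-/

open scoped ZeroAtInfty

/-- A Cantor scheme of clopen subsets of `X ⊆ K`. -/
def IsClopenCantorScheme {K : Type*} [TopologicalSpace K] (X : Set K)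
    (A : List Bool → Set K) : Prop :=
  A [] = X ∧ (∀ s, (A s).Nonempty) ∧ (∀ s, IsClopen (A s)) ∧
    (∀ (s : List Bool) (i : Bool), A (s ++ [i]) ⊆ A s) ∧
    ∀ s : List Bool, A (s ++ [false]) ∩ A (s ++ [true]) = ∅

open Set Filter Topology Function

namespace IsClopenCantorScheme

variable {K : Type*} [TopologicalSpace K] {X : Set K} {A : List Bool → Set K}

theorem append_subset (hA : IsClopenCantorScheme X A) (s t : List Bool) :
    A (s ++ t) ⊆ A s := by
  induction t using List.reverseRecOn with
  | nil => simp
  | append_singleton t i ih => simpa only [← List.append_assoc] using (hA.2.2.2.1 _ i).trans ih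

theorem subset_root (hA : IsClopenCantorScheme X A) (s : List Bool) : A s ⊆ X := by
  simpa [hA.1] using hA.append_subset [] s

theorem disjoint_append_singleton (hA : IsClopenCantorScheme X A) (s : List Bool) {i j : Bool}
    (hij : i ≠ j) : Disjoint (A (s ++ [i])) (A (s ++ [j])) := by
  have h := disjoint_iff_inter_eq_empty.mpr (hA.2.2.2.2 s)
  cases i <;> cases j <;> first | exact absurd rfl hij | exact h | exact h.symm

theorem disjoint_of_length_eq (hA : IsClopenCantorScheme X A) {s t : List Bool}
    (hlen : s.length = t.length) (hst : s ≠ t) : Disjoint (A s) (A t) := by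
  induction s using List.reverseRecOn generalizing t with
  | nil => exact absurd (List.length_eq_zero_iff.mp hlen.symm).symm hst
  | append_singleton s i ih =>
    obtain rfl | ⟨t, j, rfl⟩ := t.eq_nil_or_concat
    · simp at hlen
    simp only [List.concat_eq_append, List.length_append, List.length_singleton,
      Nat.add_right_cancel_iff] at hlen hst ⊢
    by_cases hst' : s = t
    · subst hst'
      exact hA.disjoint_append_singleton s fun hij => hst (by rw [hij])
    · exact (ih hlen hst').mono (hA.2.2.2.1 s i) (hA.2.2.2.1 t j)

def digitSet (A : List Bool → Set K) (n : ℕ) : Set K :=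
  ⋃ s ∈ {s : List Bool | s.length = n}, A (s ++ [true])

theorem isClopen_digitSet (hA : IsClopenCantorScheme X A) (n : ℕ) : IsClopen (digitSet A n) :=
  (List.finite_length_eq Bool n).isClopen_biUnion fun _ _ => hA.2.2.1 _

theorem digitSet_subset (hA : IsClopenCantorScheme X A) (n : ℕ) : digitSet A n ⊆ X :=
  iUnion₂_subset fun _ _ => hA.subset_root _

theorem mem_digitSet_iff (hA : IsClopenCantorScheme X A) {s : List Bool} {b : Bool} {x : K}
    (hx : x ∈ A (s ++ [b])) : x ∈ digitSet A s.length ↔ b = true := by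
  refine ⟨fun hx' => ?_, fun hb => mem_biUnion rfl (hb ▸ hx)⟩
  obtain ⟨t, ht, hxt⟩ := mem_iUnion₂.mp hx'
  by_contra hb
  have hne : s ++ [b] ≠ t ++ [true] := fun h => hb (by simpa using (List.append_inj' h rfl).2)
  exact disjoint_left.mp (hA.disjoint_of_length_eq (by simp [ht.symm]) hne) hx hxt

open scoped Classical in
noncomputable def digits (A : List Bool → Set K) (x : K) : ℕ → Fin 2 :=
  fun n => if x ∈ digitSet A n then 1 else 0

open scoped Classical in
theorem continuous_digits (hA : IsClopenCantorScheme X A) : Continuous (digits A) :=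
  continuous_pi fun n => continuous_const.if
    (by simp [(hA.isClopen_digitSet n).frontier_eq]) continuous_const

theorem digits_eq_zero_of_notMem (hA : IsClopenCantorScheme X A) {x : K} (hx : x ∉ X) : digits A x = 0 := by
  funext n
  simp [digits, show x ∉ digitSet A n from fun h => hx (hA.digitSet_subset n h)]

theorem exists_digits_eq [CompactSpace K] (hA : IsClopenCantorScheme X A) (d : ℕ → Fin 2) :
    ∃ x ∈ X, digits A x = d := by
  set σ : ℕ → Bool := fun n => decide (d n = 1)
  have hsucc (n : ℕ) : (List.range (n + 1)).map σ = (List.range n).map σ ++ [σ n] := by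
    simp [List.range_succ]
  obtain ⟨x, hx⟩ := IsCompact.nonempty_iInter_of_sequence_nonempty_isCompact_isClosed
    (fun n => A ((List.range n).map σ)) (fun n => hsucc n ▸ hA.2.2.2.1 _ _)
    (fun _ => hA.2.1 _) (hA.2.2.1 _).isClosed.isCompact (fun _ => (hA.2.2.1 _).isClosed)
  rw [mem_iInter] at hx
  refine ⟨x, hA.subset_root _ (hx 0), funext fun n => ?_⟩
  have h := hA.mem_digitSet_iff (hsucc n ▸ hx (n + 1))
  simp only [List.length_map, List.length_range, σ, decide_eq_true_eq] at h
  simp only [digits, h]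
  generalize d n = a
  fin_cases a <;> simp

theorem exists_continuousMap_surjOn [CompactSpace K] (hA : IsClopenCantorScheme X A) :
    ∃ φ : C(K, ℝ), (∀ x, φ x ∈ Icc 0 1) ∧ (∀ x ∉ X, φ x = 0) ∧ SurjOn φ X (Icc 0 1) := by
  refine ⟨⟨Real.ofDigits ∘ digits A, Real.continuous_ofDigits.comp hA.continuous_digits⟩,
    fun x => ⟨Real.ofDigits_nonneg _, Real.ofDigits_le_one _⟩, fun x hx => ?_, fun θ hθ => ?_⟩
  · simp [hA.digits_eq_zero_of_notMem hx, Real.ofDigits, Real.ofDigitsTerm]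
  · obtain ⟨d, -, rfl⟩ := Real.ofDigits_SurjOn (b := 2) one_lt_two hθ
    obtain ⟨x, hxX, hx⟩ := hA.exists_digits_eq d
    exact ⟨x, hxX, by simp [hx]⟩

end IsClopenCantorScheme

theorem ZeroAtInftyContinuousMap.norm_le_iff {α β : Type*} [TopologicalSpace α]
    [SeminormedAddCommGroup β] (f : C₀(α, β)) {C : ℝ} (hC : 0 ≤ C) :
    ‖f‖ ≤ C ↔ ∀ x, ‖f x‖ ≤ C := by
  rw [← norm_toBCF_eq_norm]
  exact BoundedContinuousFunction.norm_le hC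

namespace ContinuousMap

variable {K ι E : Type*} [TopologicalSpace K] [NormedAddCommGroup E]
  {U : ι → Set K} {f : ι → C(K, E)}

theorem norm_finset_sum_le_of_disjoint [CompactSpace K] (hU : Pairwise (Disjoint on U))
    (hf : ∀ α, ∀ x ∉ U α, f α x = 0) (t : Finset ι) {r : ℝ} (hr : 0 ≤ r)
    (hfr : ∀ α ∈ t, ‖f α‖ ≤ r) : ‖∑ α ∈ t, f α‖ ≤ r := by
  refine (norm_le _ hr).mpr fun x => ?_
  rw [sum_apply]
  by_cases hx : ∃ α ∈ t, x ∈ U α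
  · obtain ⟨α, hαt, hxα⟩ := hx
    rw [Finset.sum_eq_single_of_mem α hαt fun β _ hβα =>
      hf β x fun hxβ => (hU hβα).ne_of_mem hxβ hxα rfl]
    exact ((f α).norm_coe_le_norm x).trans (hfr α hαt)
  · push Not at hx
    rwa [Finset.sum_eq_zero fun α hα => hf α x (hx α hα), norm_zero]

theorem summable_of_disjoint [CompactSpace K] [CompleteSpace E] (hU : Pairwise (Disjoint on U))
    (hf : ∀ α, ∀ x ∉ U α, f α x = 0) (hf0 : Tendsto (fun α => ‖f α‖) cofinite (𝓝 0)) :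
    Summable f := by
  refine summable_iff_vanishing_norm.mpr fun ε hε => ?_
  have hfin : {α | ε / 2 ≤ ‖f α‖}.Finite := by
    simpa using eventually_cofinite.mp (hf0.eventually (gt_mem_nhds (half_pos hε)))
  refine ⟨hfin.toFinset, fun t ht => ?_⟩
  have hsmall : ∀ α ∈ t, ‖f α‖ ≤ ε / 2 := fun α hα =>
    (not_le.mp fun h => Finset.disjoint_left.mp ht hα (hfin.mem_toFinset.mpr h)).le
  linarith [norm_finset_sum_le_of_disjoint hU hf t (half_pos hε).le hsmall]

theorem tsum_apply_of_mem (hU : Pairwise (Disjoint on U)) (hf : ∀ α, ∀ x ∉ U α, f α x = 0)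
    (hsum : Summable f) {α : ι} {x : K} (hx : x ∈ U α) : (∑' β, f β) x = f α x := by
  rw [← tsum_apply hsum]
  exact tsum_eq_single α fun β hβα => hf β x fun hxβ => (hU hβα).ne_of_mem hxβ hx rfl

theorem tsum_apply_of_forall_notMem (hf : ∀ α, ∀ x ∉ U α, f α x = 0) (hsum : Summable f)
    {x : K} (hx : ∀ α, x ∉ U α) : (∑' β, f β) x = 0 := by
  rw [← tsum_apply hsum]
  simp [hf _ x (hx _)]

end ContinuousMap

section DisjointSupports

variable {K ι : Type*} [TopologicalSpace K] {U : ι → Set K} {φ : ι → C(K, ℝ)}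

theorem summable_smul_of_disjoint [CompactSpace K] [TopologicalSpace ι] [DiscreteTopology ι]
    (hU : Pairwise (Disjoint on U)) (hφU : ∀ α, ∀ x ∉ U α, φ α x = 0) (hφ : ∀ α, ‖φ α‖ ≤ 1)
    (g : C₀(ι, ℝ)) : Summable fun α => g α • φ α := by
  refine ContinuousMap.summable_of_disjoint hU (fun α x hx => by simp [hφU α x hx]) <|
    squeeze_zero (fun _ => norm_nonneg _)
      (fun α => (norm_smul_le _ _).trans (mul_le_of_le_one_right (norm_nonneg _) (hφ α))) ?_
  have hg := g.zero_at_infty'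
  rw [cocompact_eq_cofinite] at hg
  exact tendsto_norm_zero.comp hg

theorem norm_eq_of_apply_eq_mul [CompactSpace K] [TopologicalSpace ι] {F : C(K, ℝ)}
    {g : C₀(ι, ℝ)} (hφ : ∀ α, ‖φ α‖ ≤ 1) (hφ1 : ∀ α, ∃ x ∈ U α, φ α x = 1)
    (hF : ∀ α, ∀ x ∈ U α, F x = g α * φ α x) (hF0 : ∀ x, (∀ α, x ∉ U α) → F x = 0) :
    ‖F‖ = ‖g‖ := by
  have hg (α : ι) : ‖g α‖ ≤ ‖g‖ := (g.norm_le_iff (norm_nonneg g)).mp le_rfl α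
  refine le_antisymm ((ContinuousMap.norm_le _ (norm_nonneg g)).mpr fun x => ?_)
    ((g.norm_le_iff (norm_nonneg _)).mpr fun α => ?_)
  · by_cases hx : ∃ α, x ∈ U α
    · obtain ⟨α, hxα⟩ := hx
      rw [hF α x hxα, norm_mul]
      exact (mul_le_of_le_one_right (norm_nonneg _)
        (((φ α).norm_coe_le_norm x).trans (hφ α))).trans (hg α)
    · rw [hF0 x (not_exists.mp hx), norm_zero]
      exact norm_nonneg g
  · obtain ⟨x, hxα, hx1⟩ := hφ1 α
    simpa [hF α x hxα, hx1] using F.norm_coe_le_norm x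

theorem exists_linearIsometry_of_disjoint [CompactSpace K] [TopologicalSpace ι]
    [DiscreteTopology ι] (hU : Pairwise (Disjoint on U)) (hφ : ∀ α x, φ α x ∈ Icc 0 1)
    (hφU : ∀ α, ∀ x ∉ U α, φ α x = 0) (hφ1 : ∀ α, ∃ x ∈ U α, φ α x = 1) :
    ∃ T : C₀(ι, ℝ) →ₗᵢ[ℝ] C(K, ℝ),
      (∀ g α, ∀ x ∈ U α, T g x = g α * φ α x) ∧ ∀ g x, (∀ α, x ∉ U α) → T g x = 0 := by
  have hφ_norm (α : ι) : ‖φ α‖ ≤ 1 := (ContinuousMap.norm_le _ zero_le_one).mpr fun x => by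
    rw [Real.norm_eq_abs, abs_le]
    exact ⟨by linarith [(hφ α x).1], (hφ α x).2⟩
  have hsum := summable_smul_of_disjoint hU hφU hφ_norm
  have hsupp (g : C₀(ι, ℝ)) (α : ι) (x : K) (hx : x ∉ U α) : (g α • φ α) x = 0 := by
    simp [hφU α x hx]
  set T : C₀(ι, ℝ) → C(K, ℝ) := fun g => ∑' α, g α • φ α
  have hT_mem (g : C₀(ι, ℝ)) (α : ι) (x : K) (hx : x ∈ U α) : T g x = g α * φ α x :=
    ContinuousMap.tsum_apply_of_mem hU (hsupp g) (hsum g) hx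
  have hT_out (g : C₀(ι, ℝ)) (x : K) (hx : ∀ α, x ∉ U α) : T g x = 0 :=
    ContinuousMap.tsum_apply_of_forall_notMem (hsupp g) (hsum g) hx
  have hT_norm (g : C₀(ι, ℝ)) : ‖T g‖ = ‖g‖ :=
    norm_eq_of_apply_eq_mul hφ_norm hφ1 (hT_mem g) (hT_out g)
  refine ⟨⟨⟨⟨T, fun g h => ?_⟩, fun c g => ?_⟩, hT_norm⟩, hT_mem, hT_out⟩
  · simp only [T, ZeroAtInftyContinuousMap.coe_add, Pi.add_apply, add_smul]
    exact (hsum g).tsum_add (hsum h)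
  · simp only [T, ZeroAtInftyContinuousMap.coe_smul, Pi.smul_apply, smul_eq_mul, mul_smul,
      RingHom.id_apply]
    exact (hsum g).tsum_const_smul c

end DisjointSupports

section RangeOfMultiples

variable {K ι : Type*} {U : ι → Set K} {φ : ι → K → ℝ} {c : ι → ℝ}

theorem range_eq_iUnion_image_mul_Icc [Nonempty ι] {F : K → ℝ}
    (hφ : ∀ α x, φ α x ∈ Icc 0 1) (hsurj : ∀ α, SurjOn (φ α) (U α) (Icc 0 1))
    (hF : ∀ α, ∀ x ∈ U α, F x = c α * φ α x) (hF0 : ∀ x, (∀ α, x ∉ U α) → F x = 0) :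
    range F = ⋃ α, (c α * ·) '' Icc 0 1 := by
  refine Subset.antisymm (range_subset_iff.mpr fun x => ?_) (iUnion_subset fun α => ?_)
  · by_cases hx : ∃ α, x ∈ U α
    · obtain ⟨α, hxα⟩ := hx
      exact mem_iUnion.mpr ⟨α, φ α x, hφ α x, (hF α x hxα).symm⟩
    · rw [hF0 x (not_exists.mp hx)]
      exact mem_iUnion.mpr ⟨Classical.arbitrary ι, 0, left_mem_Icc.mpr zero_le_one, mul_zero _⟩
  · rintro _ ⟨t, ht, rfl⟩
    obtain ⟨x, hxα, rfl⟩ := hsurj α ht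
    exact ⟨x, hF α x hxα⟩

theorem exists_lt_range_eq_Icc_of_apply_eq_mul [TopologicalSpace K] [CompactSpace K] {F : C(K, ℝ)}
    (hφ : ∀ α x, φ α x ∈ Icc 0 1) (hsurj : ∀ α, SurjOn (φ α) (U α) (Icc 0 1))
    (hF : ∀ α, ∀ x ∈ U α, F x = c α * φ α x) (hF0 : ∀ x, (∀ α, x ∉ U α) → F x = 0)
    {α : ι} (hα : c α ≠ 0) : ∃ a b, a < b ∧ range F = Icc a b := by
  have : Nonempty ι := ⟨α⟩
  have hR := range_eq_iUnion_image_mul_Icc hφ hsurj hF hF0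
  have h0 : 0 ∈ range F := hR ▸ mem_iUnion.mpr ⟨α, 0, left_mem_Icc.mpr zero_le_one, mul_zero _⟩
  have hcα : c α ∈ range F :=
    hR ▸ mem_iUnion.mpr ⟨α, 1, right_mem_Icc.mpr zero_le_one, mul_one _⟩
  have hconn : IsConnected (range F) := ⟨⟨0, h0⟩, hR ▸ isPreconnected_iUnion
    ⟨0, mem_iInter.mpr fun β => ⟨0, left_mem_Icc.mpr zero_le_one, mul_zero _⟩⟩
    fun β => isPreconnected_Icc.image _ (continuous_const_mul _).continuousOn⟩
  have hIcc := eq_Icc_of_connected_compact hconn (isCompact_range F.continuous)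
  refine ⟨_, _, lt_of_not_ge fun hle => hα ?_, hIcc⟩
  rw [hIcc] at h0 hcα
  linarith [h0.1, h0.2, hcα.1, hcα.2]

end RangeOfMultiples

theorem stmt4_general {K : Type*} [TopologicalSpace K] [CompactSpace K]
    {ι : Type*} [TopologicalSpace ι] [DiscreteTopology ι]
    (U : ι → Set K)
    (hdisj : ∀ α β, α ≠ β → Disjoint (U α) (U β))
    (hscheme : ∀ α, ∃ A : List Bool → Set K, IsClopenCantorScheme (U α) A) :
    ∃ T : C₀(ι, ℝ) →ₗᵢ[ℝ] C(K, ℝ),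
      ∀ g : C₀(ι, ℝ), g ≠ 0 →
        ∃ a b : ℝ, a < b ∧ Set.range (T g) = Set.Icc a b := by
  choose φ hφ hφU hsurj using fun α => (hscheme α).choose_spec.exists_continuousMap_surjOn
  obtain ⟨T, hT, hT0⟩ := exists_linearIsometry_of_disjoint hdisj hφ hφU
    fun α => hsurj α (right_mem_Icc.mpr zero_le_one)
  refine ⟨T, fun g hg => ?_⟩
  obtain ⟨α, hα⟩ : ∃ α, g α ≠ 0 := by
    by_contra! h
    exact hg (ZeroAtInftyContinuousMap.ext h)
  exact exists_lt_range_eq_Icc_of_apply_eq_mul hφ hsurj (hT g) (hT0 g) hα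

/-- Under the hypotheses on `K`, `ι`, `U`, the set of functions in `C(K, ℝ)`
whose range is a nondegenerate closed interval contains, up to the zero function, an isometric
copy of `c₀(ι)`. -/
theorem stmt4 {K : Type*} [TopologicalSpace K] [CompactSpace K] [T2Space K]
    {ι : Type*} [TopologicalSpace ι] [DiscreteTopology ι] [Uncountable ι]
    (U : ι → Set K) (hne : ∀ α, (U α).Nonempty) (hclopen : ∀ α, IsClopen (U α))
    (hdisj : ∀ α β, α ≠ β → Disjoint (U α) (U β))
    (hscheme : ∀ α, ∃ A : List Bool → Set K, IsClopenCantorScheme (U α) A) :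
    ∃ T : C₀(ι, ℝ) →ₗᵢ[ℝ] C(K, ℝ),
      ∀ g : C₀(ι, ℝ), g ≠ 0 →
        ∃ a b : ℝ, a < b ∧ Set.range (T g) = Set.Icc a b :=
  stmt4_general U hdisj hscheme
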